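/- Let G be a finite connected vertex-transitive simple graph that is regular of degree ω. If k is the vertex-connectivity of G, then k ≥ (2/3)ω. -/
import Mathlib

open Finset

attribute [local instance 10] Classical.propDecidable
set_option linter.unusedSectionVars false
set_option linter.unusedVariables false

namespace WatkinsProof

variable {V : Type*} [Fintype V] {G : SimpleGraph V}

/-! ### Boundary machinery -/

noncomputable def bd (G : SimpleGraph V) (A : Finset V) : Finset V :=
  univ.filter fun v => v ∉ A ∧ ∃ u ∈ A, G.Adj u v

noncomputable def st (G : SimpleGraph V) (A : Finset V) : Finset V := (A ∪ bd G A)ᶜ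

lemma mem_bd {A : Finset V} {v : V} : v ∈ bd G A ↔ v ∉ A ∧ ∃ u ∈ A, G.Adj u v := by
  simp [bd]

lemma mem_st {A : Finset V} {v : V} : v ∈ st G A ↔ v ∉ A ∧ v ∉ bd G A := by
  simp [st, not_or]

lemma mem_bd_of_adj {A : Finset V} {u v : V} (hu : u ∈ A) (hv : v ∉ A) (h : G.Adj u v) :
    v ∈ bd G A := mem_bd.2 ⟨hv, u, hu, h⟩

lemma not_adj_st {A : Finset V} {u v : V} (hu : u ∈ A) (hv : v ∈ st G A) : ¬ G.Adj u v := by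
  intro h
  rcases mem_st.1 hv with ⟨h1, h2⟩
  exact h2 (mem_bd_of_adj hu h1 h)

lemma mem_tri {A : Finset V} (v : V) : v ∈ A ∨ v ∈ bd G A ∨ v ∈ st G A := by
  by_cases h1 : v ∈ A
  · exact Or.inl h1
  by_cases h2 : v ∈ bd G A
  · exact Or.inr (Or.inl h2)
  · exact Or.inr (Or.inr (mem_st.2 ⟨h1, h2⟩))

lemma st_st_supset {A : Finset V} : A ⊆ st G (st G A) := by
  intro v hv
  rw [mem_st]
  constructor
  · intro h; exact (mem_st.1 h).1 hv
  · intro h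
    rcases mem_bd.1 h with ⟨_, u, hu, hadj⟩
    exact not_adj_st hv hu hadj.symm

lemma partition_card (X A : Finset V) :
    X.card = (X ∩ A).card + (X ∩ bd G A).card + (X ∩ st G A).card := by
  have h1 : Disjoint (X ∩ A) (X ∩ bd G A) := by
    rw [Finset.disjoint_left]
    intro v hv hv'
    exact (mem_bd.1 (mem_inter.1 hv').2).1 (mem_inter.1 hv).2
  have h2 : Disjoint (X ∩ A ∪ X ∩ bd G A) (X ∩ st G A) := by
    rw [Finset.disjoint_left]
    intro v hv hv'
    have hst := mem_st.1 (mem_inter.1 hv').2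
    rcases mem_union.1 hv with h | h
    · exact hst.1 (mem_inter.1 h).2
    · exact hst.2 (mem_inter.1 h).2
  have hcover : X = X ∩ A ∪ X ∩ bd G A ∪ X ∩ st G A := by
    ext v
    simp only [mem_union, mem_inter]
    constructor
    · intro hv
      rcases mem_tri (A := A) (G := G) v with h | h | h
      · exact Or.inl (Or.inl ⟨hv, h⟩)
      · exact Or.inl (Or.inr ⟨hv, h⟩)
      · exact Or.inr ⟨hv, h⟩
    · rintro ((⟨h, _⟩ | ⟨h, _⟩) | ⟨h, _⟩) <;> exact h
  conv_lhs => rw [hcover]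
  rw [card_union_of_disjoint h2, card_union_of_disjoint h1]

lemma univ_partition_card (A : Finset V) :
    Fintype.card V = A.card + (bd G A).card + (st G A).card := by
  have := partition_card (G := G) (univ : Finset V) A
  simpa [card_univ] using this

lemma st_subset_st_inter (A F : Finset V) : st G F ⊆ st G (A ∩ F) := by
  intro v hv
  rcases mem_st.1 hv with ⟨h1, h2⟩
  rw [mem_st]
  refine ⟨fun h => h1 (mem_inter.1 h).2, fun h => ?_⟩
  rcases mem_bd.1 h with ⟨hv', u, hu, hadj⟩
  rcases mem_inter.1 hu with ⟨huA, huF⟩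
  exact h2 (mem_bd_of_adj huF h1 hadj)

lemma bd_inter_subset (A F : Finset V) :
    bd G (A ∩ F) ⊆ (A ∩ bd G F) ∪ (bd G A ∩ F) ∪ (bd G A ∩ bd G F) := by
  intro v hv
  rcases mem_bd.1 hv with ⟨hv', u, hu, hadj⟩
  rcases mem_inter.1 hu with ⟨huA, huF⟩
  simp only [mem_union, mem_inter]
  by_cases hA : v ∈ A
  · have hF : v ∉ F := fun hF => hv' (mem_inter.2 ⟨hA, hF⟩)
    exact Or.inl (Or.inl ⟨hA, mem_bd_of_adj huF hF hadj⟩)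
  · by_cases hF : v ∈ F
    · exact Or.inl (Or.inr ⟨mem_bd_of_adj huA hA hadj, hF⟩)
    · exact Or.inr ⟨mem_bd_of_adj huA hA hadj, mem_bd_of_adj huF hF hadj⟩

lemma bd_union_subset (A B : Finset V) : bd G (A ∪ B) ⊆ bd G A ∪ bd G B := by
  intro v hv
  rcases mem_bd.1 hv with ⟨hv', u, hu, hadj⟩
  simp only [mem_union] at hv' hu ⊢
  push_neg at hv'
  rcases hu with hu | hu
  · exact Or.inl (mem_bd_of_adj hu hv'.1 hadj)
  · exact Or.inr (mem_bd_of_adj hu hv'.2 hadj)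

lemma bd_inter_subset' (A B : Finset V) : bd G (A ∩ B) ⊆ bd G A ∪ bd G B := by
  intro v hv
  rcases mem_bd.1 hv with ⟨hv', u, hu, hadj⟩
  rcases mem_inter.1 hu with ⟨huA, huB⟩
  simp only [mem_union]
  by_cases hA : v ∈ A
  · exact Or.inr (mem_bd_of_adj huB (fun hB => hv' (mem_inter.2 ⟨hA, hB⟩)) hadj)
  · exact Or.inl (mem_bd_of_adj huA hA hadj)

lemma st_union_eq (A B : Finset V) : st G (A ∪ B) = st G A ∩ st G B := by
  ext v
  simp only [mem_inter, mem_st, mem_union]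
  constructor
  · rintro ⟨h1, h2⟩
    push_neg at h1
    refine ⟨⟨h1.1, fun h => h2 ?_⟩, ⟨h1.2, fun h => h2 ?_⟩⟩
    · rcases mem_bd.1 h with ⟨_, u, hu, hadj⟩
      exact mem_bd_of_adj (mem_union.2 (Or.inl hu))
        (fun hc => (mem_union.1 hc).elim h1.1 h1.2) hadj
    · rcases mem_bd.1 h with ⟨_, u, hu, hadj⟩
      exact mem_bd_of_adj (mem_union.2 (Or.inr hu))
        (fun hc => (mem_union.1 hc).elim h1.1 h1.2) hadj
  · rintro ⟨⟨h1, h2⟩, ⟨h3, h4⟩⟩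
    refine ⟨by push_neg; exact ⟨h1, h3⟩, fun h => ?_⟩
    rcases mem_bd.1 h with ⟨_, u, hu, hadj⟩
    rcases mem_union.1 hu with hu | hu
    · exact h2 (mem_bd_of_adj hu h1 hadj)
    · exact h4 (mem_bd_of_adj hu h3 hadj)

lemma bd_submod (A B : Finset V) :
    (bd G (A ∩ B)).card + (bd G (A ∪ B)).card ≤ (bd G A).card + (bd G B).card := by
  have key : bd G (A ∩ B) ∩ bd G (A ∪ B) ⊆ bd G A ∩ bd G B := by
    intro v hv
    rcases mem_inter.1 hv with ⟨h1, h2⟩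
    rcases mem_bd.1 h1 with ⟨_, u, hu, hadj⟩
    rcases mem_inter.1 hu with ⟨huA, huB⟩
    have hv' := (mem_bd.1 h2).1
    simp only [mem_union] at hv'
    push_neg at hv'
    exact mem_inter.2 ⟨mem_bd_of_adj huA hv'.1 hadj, mem_bd_of_adj huB hv'.2 hadj⟩
  calc (bd G (A ∩ B)).card + (bd G (A ∪ B)).card
      = (bd G (A ∩ B) ∪ bd G (A ∪ B)).card + (bd G (A ∩ B) ∩ bd G (A ∪ B)).card :=
        (card_union_add_card_inter _ _).symm
    _ ≤ (bd G A ∪ bd G B).card + (bd G A ∩ bd G B).card := by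
        refine Nat.add_le_add (card_le_card ?_) (card_le_card key)
        exact union_subset (bd_inter_subset' A B) (bd_union_subset A B)
    _ = (bd G A).card + (bd G B).card := card_union_add_card_inter _ _

/-! ### Reachability avoiding a set, cuts -/

def Reach (G : SimpleGraph V) (S : Finset V) (x y : V) : Prop :=
  ∃ p : G.Walk x y, ∀ v ∈ p.support, v ∉ S

lemma Reach.refl {S : Finset V} {x : V} (hx : x ∉ S) : Reach G S x x :=
  ⟨SimpleGraph.Walk.nil, by simp [hx]⟩

lemma Reach.mem_left {S : Finset V} {x y : V} (h : Reach G S x y) : x ∉ S := by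
  rcases h with ⟨p, hp⟩; exact hp x p.start_mem_support

lemma Reach.mem_right {S : Finset V} {x y : V} (h : Reach G S x y) : y ∉ S := by
  rcases h with ⟨p, hp⟩; exact hp y p.end_mem_support

lemma Reach.symm {S : Finset V} {x y : V} (h : Reach G S x y) : Reach G S y x := by
  rcases h with ⟨p, hp⟩
  exact ⟨p.reverse, fun v hv => hp v (by simpa [SimpleGraph.Walk.support_reverse] using hv)⟩

lemma Reach.trans {S : Finset V} {x y z : V} (h : Reach G S x y) (h' : Reach G S y z) :
    Reach G S x z := by
  rcases h with ⟨p, hp⟩; rcases h' with ⟨q, hq⟩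
  refine ⟨p.append q, fun v hv => ?_⟩
  rcases (SimpleGraph.Walk.mem_support_append_iff _ _).1 hv with h | h
  · exact hp v h
  · exact hq v h

lemma Reach.adj {S : Finset V} {x y : V} (hx : x ∉ S) (hy : y ∉ S) (h : G.Adj x y) :
    Reach G S x y :=
  ⟨h.toWalk, by simp [hx, hy]⟩

def Cut (G : SimpleGraph V) (S : Finset V) : Prop :=
  ∃ x y, x ∉ S ∧ y ∉ S ∧ ¬ Reach G S x y

lemma Cut.nonempty (hconn : G.Connected) {S : Finset V} (h : Cut G S) : S.Nonempty := by
  rcases h with ⟨x, y, hx, hy, hxy⟩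
  rcases Finset.eq_empty_or_nonempty S with rfl | h
  · exact absurd ((hconn.preconnected x y).elim fun p => ⟨p, by simp⟩) hxy
  · exact h

lemma walk_stays {F : Finset V} {x y : V} (hx : x ∈ F) (p : G.Walk x y)
    (hp : ∀ v ∈ p.support, v ∉ bd G F) : y ∈ F := by
  induction p with
  | nil => exact hx
  | @cons a b c h q ih =>
    have hb : b ∉ bd G F := hp b (by simp)
    have hbF : b ∈ F := by
      by_contra hbF
      exact hb (mem_bd_of_adj hx hbF h)
    exact ih hbF (fun v hv => hp v (by simp [hv]))

lemma cut_bd {F : Finset V} (h1 : F.Nonempty) (h2 : (st G F).Nonempty) : Cut G (bd G F) := by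
  rcases h1 with ⟨x, hx⟩
  rcases h2 with ⟨y, hy⟩
  rcases mem_st.1 hy with ⟨hyF, hybd⟩
  refine ⟨x, y, ?_, hybd, ?_⟩
  · intro hxbd; exact (mem_bd.1 hxbd).1 hx
  · rintro ⟨p, hp⟩
    exact hyF (walk_stays hx p hp)

noncomputable def comp (G : SimpleGraph V) (S : Finset V) (x : V) : Finset V :=
  univ.filter (Reach G S x)

lemma mem_comp {S : Finset V} {x v : V} : v ∈ comp G S x ↔ Reach G S x v := by
  simp [comp]

/-! ### Fragments -/

def Frag (G : SimpleGraph V) (κ : ℕ) (F : Finset V) : Prop :=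
  F.Nonempty ∧ (st G F).Nonempty ∧ (bd G F).card = κ

section Fixed

variable {κ a : ℕ} (hκ : ∀ S, Cut G S → κ ≤ S.card)

def Atom (G : SimpleGraph V) (κ a : ℕ) (A : Finset V) : Prop :=
  Frag G κ A ∧ A.card = a

include hκ

lemma kappa_le_bd {F : Finset V} (h1 : F.Nonempty) (h2 : (st G F).Nonempty) :
    κ ≤ (bd G F).card :=
  hκ _ (cut_bd h1 h2)

lemma frag_st {F : Finset V} (hF : Frag G κ F) :
    Frag G κ (st G F) ∧ bd G (st G F) = bd G F ∧ st G (st G F) = F := by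
  obtain ⟨hFne, hstne, hcard⟩ := hF
  have hsub : bd G (st G F) ⊆ bd G F := by
    intro v hv
    rcases mem_bd.1 hv with ⟨hv', u, hu, hadj⟩
    rcases mem_tri (A := F) (G := G) v with h | h | h
    · exact absurd hadj.symm (not_adj_st h hu)
    · exact h
    · exact absurd h hv'
  have hstst : (st G (st G F)).Nonempty := hFne.mono st_st_supset
  have hge : κ ≤ (bd G (st G F)).card := kappa_le_bd hκ hstne hstst
  have hbdeq : bd G (st G F) = bd G F :=
    eq_of_subset_of_card_le hsub (by omega)
  have hststeq : st G (st G F) = F := by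
    ext v
    rw [mem_st, hbdeq]
    constructor
    · rintro ⟨h1, h2⟩
      rcases mem_tri (A := F) (G := G) v with h | h | h
      · exact h
      · exact absurd h h2
      · exact absurd h h1
    · intro hv
      refine ⟨fun h => (mem_st.1 h).1 hv, fun h => (mem_bd.1 h).1 hv⟩
  refine ⟨⟨hstne, (show (st G (st G F)).Nonempty by rw [hststeq]; exact hFne), by rw [hbdeq]; exact hcard⟩, hbdeq, hststeq⟩

variable (ha : ∀ F, Frag G κ F → a ≤ F.card)
include ha

/-- Case (a) of the key lemma. -/
lemma caseA {A F : Finset V} (hA : Atom G κ a A) (hF : Frag G κ F)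
    (hAF : (A ∩ F).Nonempty) (h1 : (st G A ∩ st G F).Nonempty) : A ⊆ F := by
  obtain ⟨⟨hAne, hAstne, hAcard⟩, hAa⟩ := hA
  obtain ⟨hFne, hFstne, hFcard⟩ := hF
  have hstinter : (st G (A ∩ F)).Nonempty := hFstne.mono (st_subset_st_inter A F)
  have hk1 : κ ≤ (bd G (A ∩ F)).card := kappa_le_bd hκ hAF hstinter
  have hk2 : κ ≤ (bd G (A ∪ F)).card := by
    refine kappa_le_bd hκ (hAne.mono subset_union_left) ?_
    rw [st_union_eq]; exact h1
  have hsub := bd_submod (G := G) A F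
  have hceq : (bd G (A ∩ F)).card = κ := by omega
  have hfragAF : Frag G κ (A ∩ F) := ⟨hAF, hstinter, hceq⟩
  have hle : a ≤ (A ∩ F).card := ha _ hfragAF
  have : A ∩ F = A := eq_of_subset_of_card_le inter_subset_left (by omega)
  exact fun v hv => (mem_inter.1 (this ▸ hv)).2

/-- The contradiction pattern. -/
lemma lemma0 {X Y : Finset V} (hX : Frag G κ X) (hXa : X.card ≤ a) (hY : Frag G κ Y)
    (hXY : (X ∩ Y).Nonempty) (hst : st G Y ⊆ bd G X) : False := by
  obtain ⟨hXne, hXstne, hXcard⟩ := hX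
  obtain ⟨hYne, hYstne, hYcard⟩ := hY
  have hstY : Frag G κ (st G Y) := (frag_st hκ ⟨hYne, hYstne, hYcard⟩).1
  have haY : a ≤ (st G Y).card := ha _ hstY
  have hstinter : (st G (X ∩ Y)).Nonempty := hYstne.mono (st_subset_st_inter X Y)
  have hk1 : κ ≤ (bd G (X ∩ Y)).card := kappa_le_bd hκ hXY hstinter
  have hk2 : (bd G (X ∩ Y)).card ≤
      (X ∩ bd G Y).card + (bd G X ∩ Y).card + (bd G X ∩ bd G Y).card := by
    calc (bd G (X ∩ Y)).card ≤ ((X ∩ bd G Y) ∪ (bd G X ∩ Y) ∪ (bd G X ∩ bd G Y)).card :=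
          card_le_card (bd_inter_subset X Y)
      _ ≤ _ := le_trans (card_union_le _ _) (by
            have := card_union_le (X ∩ bd G Y) (bd G X ∩ Y); omega)
  have hpart : (bd G X).card =
      (bd G X ∩ Y).card + (bd G X ∩ bd G Y).card + (bd G X ∩ st G Y).card :=
    partition_card (bd G X) Y
  have heq : bd G X ∩ st G Y = st G Y := inter_eq_right.2 hst
  have hpartX : X.card = (X ∩ Y).card + (X ∩ bd G Y).card + (X ∩ st G Y).card :=
    partition_card X Y
  have h1 : 1 ≤ (X ∩ Y).card := card_pos.2 hXY
  rw [heq] at hpart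
  omega

/-- The Key Lemma: an atom meeting a fragment is contained in it. -/
lemma keyLemma {A F : Finset V} (hA : Atom G κ a A) (hF : Frag G κ F)
    (hAF : (A ∩ F).Nonempty) : A ⊆ F := by
  by_cases h1 : (st G A ∩ st G F).Nonempty
  · exact caseA hκ ha hA hF hAF h1
  rw [not_nonempty_iff_eq_empty] at h1
  obtain ⟨hstF, hbdstF, hststF⟩ := frag_st hκ hF
  by_cases h2 : (A ∩ st G F).Nonempty
  · exfalso
    by_cases h3 : (st G A ∩ F).Nonempty
    · -- caseA applied to (A, st F) gives A ⊆ st F, contradicting A ∩ F ≠ ∅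
      have : A ⊆ st G F := by
        refine caseA hκ ha hA hstF h2 ?_
        rw [hststF]; exact h3
      rcases hAF with ⟨v, hv⟩
      rcases mem_inter.1 hv with ⟨hvA, hvF⟩
      exact (mem_st.1 (this hvA)).1 hvF
    · -- st A ⊆ bd F; derive |F| ≤ a, then contradiction pattern with X := F, Y := A
      rw [not_nonempty_iff_eq_empty] at h3
      have hstAbdF : st G A ⊆ bd G F := by
        intro v hv
        rcases mem_tri (A := F) (G := G) v with h | h | h
        · exact absurd (mem_inter.2 ⟨hv, h⟩) (by rw [h3]; exact notMem_empty v)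
        · exact h
        · exact absurd (mem_inter.2 ⟨hv, h⟩) (by rw [h1]; exact notMem_empty v)
      obtain ⟨⟨hAne, hAstne, hAcard⟩, hAa⟩ := hA
      obtain ⟨hFne, hFstne, hFcard⟩ := hF
      -- submodularity on A and st F
      have hk1 : κ ≤ (bd G (A ∩ st G F)).card := by
        have hne2 : (st G (st G F)).Nonempty := by rw [hststF]; exact hFne
        exact kappa_le_bd hκ h2 (hne2.mono (st_subset_st_inter A (st G F)))
      have hsubm := bd_submod (G := G) A (st G F)
      have hstUnion : st G (A ∪ st G F) = ∅ := by
        rw [st_union_eq, hststF]; exact h3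
      have hcardbd : (bd G (st G F)).card = κ := by rw [hbdstF]; exact hFcard
      have hUnivU := univ_partition_card (G := G) (A ∪ st G F)
      have hUnivF := univ_partition_card (G := G) F
      rw [hstUnion] at hUnivU
      have hcu : (A ∪ st G F).card ≤ A.card + (st G F).card := card_union_le _ _
      have hFa : F.card ≤ a := by
        simp only [card_empty] at hUnivU
        omega
      exact lemma0 hκ ha ⟨hFne, hFstne, hFcard⟩ hFa ⟨hAne, hAstne, hAcard⟩
        (by rwa [inter_comm]) hstAbdF
  · -- st F ⊆ bd A: contradiction pattern with X := A, Y := F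
    exfalso
    rw [not_nonempty_iff_eq_empty] at h2
    have hstFbdA : st G F ⊆ bd G A := by
      intro v hv
      rcases mem_tri (A := A) (G := G) v with h | h | h
      · exact absurd (mem_inter.2 ⟨h, hv⟩) (by rw [h2]; exact notMem_empty v)
      · exact h
      · exact absurd (mem_inter.2 ⟨h, hv⟩) (by rw [h1]; exact notMem_empty v)
    exact lemma0 hκ ha hA.1 (le_of_eq hA.2) hF hAF hstFbdA

omit ha

/-- reachability classes of a minimum cut are fragments with boundary the cut itself -/
lemma comp_frag {T : Finset V} (hT : Cut G T) (hTc : T.card = κ) {w : V} (hw : w ∉ T) :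
    Frag G κ (comp G T w) ∧ bd G (comp G T w) = T ∧ w ∈ comp G T w ∧
      ∀ v ∈ comp G T w, v ∉ T := by
  have hwmem : w ∈ comp G T w := mem_comp.2 (Reach.refl hw)
  have hdisj : ∀ v ∈ comp G T w, v ∉ T := fun v hv => (mem_comp.1 hv).mem_right
  have hbdsub : bd G (comp G T w) ⊆ T := by
    intro v hv
    rcases mem_bd.1 hv with ⟨hv', u, hu, hadj⟩
    by_contra hvT
    exact hv' (mem_comp.2 ((mem_comp.1 hu).trans (Reach.adj (hdisj u hu) hvT hadj)))
  obtain ⟨x, y, hx, hy, hxy⟩ := hT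
  have hstne : (st G (comp G T w)).Nonempty := by
    have : x ∉ comp G T w ∨ y ∉ comp G T w := by
      by_contra h
      push_neg at h
      exact hxy ((mem_comp.1 h.1).symm.trans (mem_comp.1 h.2))
    rcases this with h | h
    · exact ⟨x, mem_st.2 ⟨h, fun hc => hx (hbdsub hc)⟩⟩
    · exact ⟨y, mem_st.2 ⟨h, fun hc => hy (hbdsub hc)⟩⟩
  have hk : κ ≤ (bd G (comp G T w)).card := kappa_le_bd hκ ⟨w, hwmem⟩ hstne
  have hbdeq : bd G (comp G T w) = T :=
    eq_of_subset_of_card_le hbdsub (by have := card_le_card hbdsub; omega)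
  exact ⟨⟨⟨w, hwmem⟩, hstne, by rw [hbdeq]; exact hTc⟩, hbdeq, hwmem, hdisj⟩

end Fixed

/-! ### Automorphism action -/

section Iso

variable (φ : G ≃g G)

lemma mem_image_iso {A : Finset V} {v : V} : v ∈ A.image ⇑φ ↔ φ.symm v ∈ A := by
  rw [Finset.mem_image]
  constructor
  · rintro ⟨u, hu, rfl⟩
    simpa using hu
  · intro h
    exact ⟨φ.symm v, h, by simp⟩

lemma bd_image (A : Finset V) : bd G (A.image ⇑φ) = (bd G A).image ⇑φ := by
  ext v
  rw [mem_image_iso, mem_bd, mem_bd, mem_image_iso]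
  constructor
  · rintro ⟨h1, u, hu, hadj⟩
    refine ⟨h1, φ.symm u, (mem_image_iso φ).1 hu, ?_⟩
    have : G.Adj (φ (φ.symm u)) (φ (φ.symm v)) := by simpa using hadj
    exact φ.map_adj_iff.1 this
  · rintro ⟨h1, u, hu, hadj⟩
    refine ⟨h1, φ u, (mem_image_iso φ).2 (by simpa using hu), ?_⟩
    have := φ.map_adj_iff.2 hadj
    simpa using this

lemma st_image (A : Finset V) : st G (A.image ⇑φ) = (st G A).image ⇑φ := by
  ext v
  rw [mem_image_iso, mem_st, mem_st, mem_image_iso, bd_image, mem_image_iso]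

lemma card_image_iso (A : Finset V) : (A.image ⇑φ).card = A.card :=
  card_image_of_injective _ (φ.toEquiv.injective)

lemma frag_image {κ : ℕ} {A : Finset V} (hA : Frag G κ A) : Frag G κ (A.image ⇑φ) := by
  obtain ⟨h1, h2, h3⟩ := hA
  exact ⟨h1.image _, by rw [st_image]; exact h2.image _, by rw [bd_image, card_image_iso]; exact h3⟩

lemma atom_image {κ a : ℕ} {A : Finset V} (hA : Atom G κ a A) : Atom G κ a (A.image ⇑φ) :=
  ⟨frag_image φ hA.1, by rw [card_image_iso]; exact hA.2⟩

end Iso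

/-! ### Bridge to subgraph connectivity -/

lemma reachable_coe {S : Finset V} :
    ∀ {x y : V} (p : G.Walk x y) (hp : ∀ v ∈ p.support, v ∉ S)
      (hx : x ∈ ((⊤ : G.Subgraph).deleteVerts ↑S).verts)
      (hy : y ∈ ((⊤ : G.Subgraph).deleteVerts ↑S).verts),
      (((⊤ : G.Subgraph).deleteVerts ↑S).coe).Reachable ⟨x, hx⟩ ⟨y, hy⟩ := by
  intro x y p
  induction p with
  | nil => intro _ _ _; rfl
  | @cons a b c h q ih =>
    intro hp hx hy
    have hb : b ∉ S := hp b (by simp)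
    have hbv : b ∈ ((⊤ : G.Subgraph).deleteVerts ↑S).verts := by
      simp [SimpleGraph.Subgraph.deleteVerts_verts, hb]
    have hadj : (((⊤ : G.Subgraph).deleteVerts ↑S).coe).Adj ⟨a, hx⟩ ⟨b, hbv⟩ := by
      simp only [SimpleGraph.Subgraph.coe_adj, SimpleGraph.Subgraph.deleteVerts_adj]
      refine ⟨trivial, ?_, trivial, ?_, h⟩
      · simpa using hp a (by simp)
      · simpa using hb
    exact hadj.reachable.trans (ih (fun v hv => hp v (by simp [hv])) hbv hy)

lemma connected_of_reach {S : Finset V} (hne : ∃ v, v ∉ S)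
    (hall : ∀ x y, x ∉ S → y ∉ S → Reach G S x y) :
    (((⊤ : G.Subgraph).deleteVerts ↑S).coe).Connected := by
  rw [SimpleGraph.connected_iff]
  constructor
  · rintro ⟨x, hx⟩ ⟨y, hy⟩
    have hxS : x ∉ S := by
      simp only [SimpleGraph.Subgraph.deleteVerts_verts] at hx
      simpa using hx.2
    have hyS : y ∉ S := by
      simp only [SimpleGraph.Subgraph.deleteVerts_verts] at hy
      simpa using hy.2
    obtain ⟨p, hp⟩ := hall x y hxS hyS
    exact reachable_coe p hp hx hy
  · obtain ⟨v, hv⟩ := hne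
    exact ⟨⟨v, by simp [SimpleGraph.Subgraph.deleteVerts_verts, hv]⟩⟩

end WatkinsProof

/-- `G` remains connected after deleting any set of fewer than `k` vertices. -/
def IsVertexKConnected {V : Type*} (G : SimpleGraph V) (k : ℕ) : Prop :=
  ∀ S : Finset V, S.card < k → (((⊤ : G.Subgraph).deleteVerts ↑S).coe).Connected

open WatkinsProof in
/-- Watkins' theorem: a finite connected vertex-transitive graph of degree `ω`
has vertex-connectivity `k ≥ (2/3)ω`. -/
theorem stmt_1 {V : Type*} [Fintype V] (G : SimpleGraph V) (ω k : ℕ)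
    (hconn : G.Connected)
    (htrans : ∀ v w : V, ∃ φ : G ≃g G, φ v = w)
    (hreg : ∀ v : V, (G.neighborSet v).ncard = ω)
    (hk : IsVertexKConnected G k)
    (hkmax : ∀ m : ℕ, IsVertexKConnected G m → m ≤ k) :
    2 * ω ≤ 3 * k := by
  classical
  obtain ⟨v0⟩ := hconn.nonempty
  have hn1 : 1 ≤ Fintype.card V := Fintype.card_pos_iff.2 ⟨v0⟩
  set n := Fintype.card V with hn
  -- the neighbor finset and degree facts
  set nb : V → Finset V := fun v => univ.filter (G.Adj v) with hnbdef
  have hnb : ∀ v, (nb v).card = ω := by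
    intro v
    have hset : G.neighborSet v = ↑(nb v) := by
      ext w; simp [hnbdef, SimpleGraph.mem_neighborSet]
    rw [← hreg v, hset, Set.ncard_coe_finset]
  have hωn : ω + 1 ≤ n := by
    have hsub : nb v0 ⊆ univ.erase v0 := by
      intro w hw
      simp only [hnbdef, mem_filter] at hw
      exact mem_erase.2 ⟨hw.2.ne', mem_univ w⟩
    have hc := card_le_card hsub
    rw [hnb v0, card_erase_of_mem (mem_univ v0), card_univ] at hc
    omega
  by_cases hcut : ∃ S : Finset V, Cut G S
  · obtain ⟨S0, hS0⟩ := hcut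
    -- a minimum cut T, κ := |T|
    obtain ⟨T, hTmem, hTmin⟩ :=
      (univ.filter (Cut G) : Finset (Finset V)).exists_min_image card ⟨S0, by simp [hS0]⟩
    rw [mem_filter] at hTmem
    have hTcut : Cut G T := hTmem.2
    set κ := T.card with hκdef
    have hκ : ∀ S, Cut G S → κ ≤ S.card := fun S hS => hTmin S (by simp [hS])
    obtain ⟨x0, y0, hx0, hy0, hxy0⟩ := id hTcut
    have hcf := comp_frag hκ hTcut rfl hx0
    -- a minimum fragment A0, a := |A0|
    obtain ⟨A0, hA0mem, hA0min⟩ :=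
      (univ.filter (Frag G κ) : Finset (Finset V)).exists_min_image card ⟨comp G T x0, by simp only [mem_filter]; exact ⟨mem_univ _, hcf.1⟩⟩
    rw [mem_filter] at hA0mem
    set a := A0.card with hadef
    have ha : ∀ F, Frag G κ F → a ≤ F.card := fun F hF => hA0min F (by simp [hF])
    have hA0 : Atom G κ a A0 := ⟨hA0mem.2, rfl⟩
    -- every vertex lies in an atom
    have hatom : ∀ v : V, ∃ B, Atom G κ a B ∧ v ∈ B := by
      intro v
      obtain ⟨w0, hw0⟩ := hA0mem.2.1
      obtain ⟨φ, hφ⟩ := htrans w0 v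
      exact ⟨A0.image ⇑φ, atom_image φ hA0, Finset.mem_image.2 ⟨w0, hw0, hφ⟩⟩
    -- distinct atoms are equal or disjoint
    have hdisj : ∀ B B' : Finset V, Atom G κ a B → Atom G κ a B' →
        (B ∩ B').Nonempty → B = B' := by
      intro B B' hB hB' hne
      exact subset_antisymm (keyLemma hκ ha hB hB'.1 hne)
        (keyLemma hκ ha hB' hB.1 (by rwa [inter_comm]))
    -- minimum cuts absorb the atoms they meet
    have habs : ∀ C : Finset V, Cut G C → C.card = κ → ∀ u ∈ C,
        ∃ B, Atom G κ a B ∧ u ∈ B ∧ B ⊆ C := by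
      intro C hC hCc u hu
      obtain ⟨B, hB, huB⟩ := hatom u
      refine ⟨B, hB, huB, ?_⟩
      by_contra hsub
      obtain ⟨w, hwB, hwC⟩ := not_subset.1 hsub
      obtain ⟨hfrag, hbdeq, hwmem, hdisjT⟩ := comp_frag hκ hC hCc hwC
      have hBsub : B ⊆ comp G C w :=
        keyLemma hκ ha hB hfrag ⟨w, mem_inter.2 ⟨hwB, hwmem⟩⟩
      exact hdisjT u (hBsub huB) hu
    have hTne : T.Nonempty := hTcut.nonempty hconn
    obtain ⟨u, hu⟩ := hTne
    obtain ⟨B, hB, huB, hBT⟩ := habs T hTcut rfl u hu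
    -- degree bound
    have hdeg : ω + 1 ≤ a + κ := by
      obtain ⟨v, hv⟩ := hB.1.1
      have hsub : nb v ⊆ (B.erase v) ∪ bd G B := by
        intro w hw
        simp only [hnbdef, mem_filter] at hw
        by_cases hwB : w ∈ B
        · exact mem_union.2 (Or.inl (mem_erase.2 ⟨hw.2.ne', hwB⟩))
        · exact mem_union.2 (Or.inr (mem_bd_of_adj hv hwB hw.2))
      have h1 := card_le_card hsub
      have h2 := card_union_le (B.erase v) (bd G B)
      rw [hnb v] at h1
      have h3 : (B.erase v).card = a - 1 := by rw [card_erase_of_mem hv, hB.2]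
      have ha1 : 1 ≤ a := hB.2 ▸ card_pos.2 ⟨v, hv⟩
      have h4 : (bd G B).card = κ := hB.1.2.2
      omega
    -- the key inequality 2a ≤ κ
    have h2a : 2 * a ≤ κ := by
      by_cases hBTeq : B = T
      · -- T itself is an atom: impossible
        exfalso
        obtain ⟨hFfrag, hFbd, hx0F, hFdisj⟩ := comp_frag hκ hTcut rfl hx0
        set F := comp G T x0 with hFdef
        obtain ⟨hF'frag, hF'bd, _⟩ := frag_st hκ hFfrag
        have hTfrag : Frag G κ T := by rw [← hBTeq]; exact hB.1
        have hCcut : Cut G (bd G T) := cut_bd hTfrag.1 hTfrag.2.1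
        have hCcard : (bd G T).card = κ := hTfrag.2.2
        have hκa : κ = a := by rw [hκdef, ← hBTeq, hB.2]
        obtain ⟨t, ht⟩ : T.Nonempty := ⟨u, hu⟩
        -- a vertex f ∈ bd T ∩ F
        have htF : t ∈ bd G F := by rw [hFbd]; exact ht
        obtain ⟨-, f, hfF, hadjf⟩ := mem_bd.1 htF
        have hf : f ∈ bd G T ∩ F :=
          mem_inter.2 ⟨mem_bd_of_adj ht (hFdisj f hfF) hadjf.symm, hfF⟩
        -- a vertex f' ∈ bd T ∩ st F
        have htF' : t ∈ bd G (st G F) := by rw [hF'bd, hFbd]; exact ht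
        obtain ⟨-, f', hf'F, hadjf'⟩ := mem_bd.1 htF'
        have hf'T : f' ∉ T := fun hc => (mem_st.1 hf'F).2 (by rw [hFbd]; exact hc)
        have hf' : f' ∈ bd G T ∩ st G F :=
          mem_inter.2 ⟨mem_bd_of_adj ht hf'T hadjf'.symm, hf'F⟩
        -- the atom absorbed by the min cut bd T is all of bd T
        obtain ⟨B', hB', hfB', hB'C⟩ := habs (bd G T) hCcut hCcard f (mem_inter.1 hf).1
        have hB'eq : B' = bd G T := by
          apply eq_of_subset_of_card_le hB'C
          rw [hCcard, hB'.2, hκa]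
        -- B' = bd T meets F, hence is inside F; but it also meets st F
        have hB'F : B' ⊆ F :=
          keyLemma hκ ha hB' hFfrag ⟨f, mem_inter.2 ⟨hfB', (mem_inter.1 hf).2⟩⟩
        have hf'B' : f' ∈ B' := by rw [hB'eq]; exact (mem_inter.1 hf').1
        exact (mem_st.1 (mem_inter.1 hf').2).1 (hB'F hf'B')
      · -- two disjoint atoms inside T
        obtain ⟨u', hu'T, hu'B⟩ := exists_of_ssubset (Finset.ssubset_iff_subset_ne.2 ⟨hBT, hBTeq⟩)
        obtain ⟨B₂, hB₂, hu'B₂, hB₂T⟩ := habs T hTcut rfl u' hu'T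
        have hBB₂ : Disjoint B B₂ := by
          rw [Finset.disjoint_iff_inter_eq_empty]
          by_contra hne
          have := hdisj B B₂ hB hB₂ (nonempty_iff_ne_empty.2 hne)
          exact hu'B (this ▸ hu'B₂)
        have hcard : (B ∪ B₂).card = 2 * a := by
          rw [card_union_of_disjoint hBB₂, hB.2, hB₂.2]; ring
        have := card_le_card (union_subset hBT hB₂T)
        rw [hcard] at this
        omega
    have h2ω3κ : 2 * ω ≤ 3 * κ := by omega
    -- conclude via hkmax applied to min κ n
    have hm : IsVertexKConnected G (min κ n) := by
      intro S hS
      apply connected_of_reach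
      · by_contra h
        push_neg at h
        have : S = univ := eq_univ_iff_forall.2 h
        rw [this, card_univ] at hS
        have := min_le_right κ n
        omega
      · intro x y hx hy
        by_contra hr
        have := hκ S ⟨x, y, hx, hy, hr⟩
        have := min_le_left κ n
        omega
    have hle := hkmax _ hm
    rcases le_total κ n with h | h
    · rw [min_eq_left h] at hle; omega
    · rw [min_eq_right h] at hle; omega
  · -- no cut at all: G is n-connected
    push_neg at hcut
    have hm : IsVertexKConnected G n := by
      intro S hS
      apply connected_of_reach
      · by_contra h
        push_neg at h
        have : S = univ := eq_univ_iff_forall.2 h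
        rw [this, card_univ] at hS
        omega
      · intro x y hx hy
        by_contra hr
        exact hcut S ⟨x, y, hx, hy, hr⟩
    have hle := hkmax _ hm
    omega
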